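/- arXiv:2006.00374 — 5 statements merged into one kernel-verified Lean document; each statement's English description precedes it below -/
import Mathlib

section
/- Let G be a group and let a, b, h, c be elements of G with c = h⁻¹ a h. If c and b commute, then the commutator [a,b] = a b a⁻¹ b⁻¹ equals h · (c h⁻¹ c⁻¹) · (c b h c⁻¹ b⁻¹) · (b h⁻¹ b⁻¹); i.e., [a,b] is a product of two conjugates of h and two conjugates of h⁻¹. -/
theorem stmt_0_general {G : Type*} [Group G] (a b h c : G) (hc : c = h⁻¹ * a * h) :
    a * b * a⁻¹ * b⁻¹ =
      h * (c * h⁻¹ * c⁻¹) * (c * b * h * c⁻¹ * b⁻¹) * (b * h⁻¹ * b⁻¹) := by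
  subst hc
  group

/-- The commutator `[a,b]` as a product of two conjugates of `h` and two of `h⁻¹`. -/
theorem stmt_0 {G : Type*} [Group G] (a b h c : G) (hc : c = h⁻¹ * a * h)
    (hcomm : c * b = b * c) :
    a * b * a⁻¹ * b⁻¹ =
      h * (c * h⁻¹ * c⁻¹) * (c * b * h * c⁻¹ * b⁻¹) * (b * h⁻¹ * b⁻¹) :=
  stmt_0_general a b h c hc
end

section
/- Let G be a group equal to a direct product ∏_{j=1}^J G_j of groups, let S be a group, and let φ_j : S → G_j be homomorphisms whose images normally generate G_j for each j. Let Δ : S → G be the diagonal homomorphism s ↦ (φ_1(s), ..., φ_J(s)). If each G_j is perfect and each φ_j(S) normally generates G_j, then the normal closure of the image of Δ in G is all of G. -/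
/-!
The normal closure `N` of the diagonal image is normal in `∏ Gⱼ` and projects onto every factor.
For `x ∈ N` and `b ∈ Gⱼ`, the commutator of `x` with `b` placed at coordinate `j` lies in `N` and
is `⁅xⱼ, b⁆` placed at coordinate `j`. Since `xⱼ` ranges over all of `Gⱼ` and `Gⱼ` is perfect,
`N` contains every factor, hence the whole finite product.
-/

open scoped commutatorElement

theorem Pi.commutatorElement_mulSingle {ι : Type*} {G : ι → Type*} [∀ i, Group (G i)]
    [DecidableEq ι] (x : ∀ i, G i) (j : ι) (b : G j) :
    ⁅x, Pi.mulSingle j b⁆ = Pi.mulSingle j ⁅x j, b⁆ := by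
  funext i
  rcases eq_or_ne i j with rfl | hij
  · simp [commutatorElement_def]
  · simp [commutatorElement_def, Pi.mulSingle_eq_of_ne hij]

theorem Subgroup.Normal.commutatorElement_mem_left {H : Type*} [Group H] {N : Subgroup H}
    (hN : N.Normal) {x : H} (hx : x ∈ N) (y : H) : ⁅x, y⁆ ∈ N := by
  rw [commutatorElement_def, mul_assoc, mul_assoc]
  exact N.mul_mem hx (by simpa only [mul_assoc] using hN.conj_mem _ (N.inv_mem hx) y)

namespace Subgroup

variable {ι : Type*} {G : ι → Type*} [∀ i, Group (G i)]

theorem mulSingle_mem_of_normal_of_map_eval_eq_top [DecidableEq ι] {N : Subgroup (∀ i, G i)}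
    (hN : N.Normal) {j : ι} (hperf : _root_.commutator (G j) = ⊤)
    (hsurj : N.map (Pi.evalMonoidHom G j) = ⊤) (a : G j) : Pi.mulSingle j a ∈ N := by
  suffices _root_.commutator (G j) ≤ N.comap (MonoidHom.mulSingle G j) by
    exact this (hperf ▸ mem_top a)
  rw [commutator_eq_closure, closure_le]
  rintro _ ⟨c, b, rfl⟩
  obtain ⟨x, hx, rfl⟩ : c ∈ N.map (Pi.evalMonoidHom G j) := hsurj ▸ mem_top c
  change Pi.mulSingle j ⁅x j, b⁆ ∈ N
  rw [← Pi.commutatorElement_mulSingle]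
  exact hN.commutatorElement_mem_left hx _

theorem eq_top_of_normal_of_map_eval_eq_top [Finite ι] {N : Subgroup (∀ i, G i)} (hN : N.Normal)
    (hperf : ∀ i, _root_.commutator (G i) = ⊤) (hsurj : ∀ i, N.map (Pi.evalMonoidHom G i) = ⊤) :
    N = ⊤ := by
  classical
  exact eq_top_iff.2 fun x _ ↦ pi_mem_of_mulSingle_mem x fun i ↦
    mulSingle_mem_of_normal_of_map_eval_eq_top hN (hperf i) (hsurj i) (x i)

theorem map_eval_normalClosure_range_pi {S : Type*} [Group S] (φ : ∀ i, S →* G i) (i : ι) :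
    (normalClosure (Set.range (MonoidHom.pi φ))).map (Pi.evalMonoidHom G i) =
      normalClosure (Set.range (φ i)) := by
  classical
  rw [map_normalClosure _ _ fun g ↦ ⟨Pi.mulSingle i g, Pi.mulSingle_eq_same i g⟩,
    ← Set.range_comp]
  rfl

end Subgroup

/-- If each `G j` is perfect and each `φ j` has image normally generating `G j`, then the
diagonal homomorphism's image normally generates the direct product. -/
theorem stmt_9 {J : ℕ} (Gj : Fin J → Type*) [∀ j, Group (Gj j)] {S : Type*} [Group S]
    (φ : ∀ j, S →* Gj j)
    (hperf : ∀ j, commutator (Gj j) = ⊤)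
    (hgen : ∀ j, Subgroup.normalClosure (Set.range (φ j)) = ⊤) :
    Subgroup.normalClosure (Set.range (Pi.monoidHom φ)) = (⊤ : Subgroup (∀ j, Gj j)) :=
  Subgroup.eq_top_of_normal_of_map_eval_eq_top Subgroup.normalClosure_normal hperf fun j ↦
    (Subgroup.map_eval_normalClosure_range_pi φ j).trans (hgen j)
end

section
/- Every non-central element of SU(2) normally generates SU(2): if g ∈ SU(2) with g ≠ ±I, then the normal closure of {g} in SU(2) equals SU(2). -/
/-!
`SU(2)` is the group `S³` of unit quaternions, in which two elements are conjugate exactly when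
they have the same real part. If a normal subgroup `N` contains `q` with real part `c`, it
contains every `q * (x * q⁻¹ * x⁻¹)`; their real parts vary continuously over the connected `S³`,
from `1` at `x = 1` to `2 c² - 1` at an `x` conjugating `q⁻¹` to `q`, so `N` has elements of every
real part in `[2 c² - 1, 1]`. Iterating `c ↦ 2 c² - 1` (that is, `cos θ ↦ cos 2θ`) from `|c| < 1`
reaches `0`, and from `0` every real part in `[-1, 1]`, hence every conjugacy class, is reached.
-/

open Quaternion Metric Set ComplexConjugate

/-- `SU(2)` as the subgroup of the unitary group `U(2)` of matrices of determinant `1`. -/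
def SU2 : Subgroup (Matrix.unitaryGroup (Fin 2) ℂ) where
  carrier := {g | (g : Matrix (Fin 2) (Fin 2) ℂ).det = 1}
  one_mem' := by simp
  mul_mem' := by
    intro a b ha hb
    simp only [Set.mem_setOf_eq] at *
    simp [Matrix.det_mul, ha, hb]
  inv_mem' := by
    intro a ha
    simp only [Set.mem_setOf_eq] at *
    rw [Matrix.UnitaryGroup.inv_val, Matrix.star_eq_conjTranspose,
      Matrix.det_conjTranspose, ha]
    exact star_one ℂ

theorem zero_mem_of_forall_Icc_subset {R : Set ℝ} (hR : ∀ c ∈ R, Icc (2 * c ^ 2 - 1) 1 ⊆ R)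
    {c : ℝ} (hc : c ∈ R) (hc1 : c ^ 2 < 1) : 0 ∈ R := by
  suffices h : ∀ n : ℕ, ∀ c ∈ R, 1 ≤ 2 ^ n * (1 - c ^ 2) → 0 ∈ R by
    obtain ⟨n, hn⟩ := pow_unbounded_of_one_lt (1 - c ^ 2)⁻¹ one_lt_two
    exact h n c hc (by rw [inv_lt_iff_one_lt_mul₀ (by linarith)] at hn; linarith)
  intro n
  induction n with
  | zero =>
    intro c hc h
    rwa [show c = 0 by nlinarith] at hc
  | succ n ih =>
    intro c hc h
    have hc1 : c ^ 2 < 1 := by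
      by_contra! hc1
      nlinarith [pow_pos (two_pos : (0 : ℝ) < 2) (n + 1)]
    by_cases hc2 : 2 * c ^ 2 - 1 ≤ 0
    · exact hR c hc ⟨hc2, zero_le_one⟩
    refine ih _ (hR c hc ⟨le_rfl, by linarith⟩) ?_
    have hdouble : 2 * (1 - c ^ 2) ≤ 1 - (2 * c ^ 2 - 1) ^ 2 := by
      nlinarith [mul_pos (sub_pos.2 hc1) (not_le.1 hc2)]
    calc (1 : ℝ) ≤ 2 ^ (n + 1) * (1 - c ^ 2) := h
      _ = 2 ^ n * (2 * (1 - c ^ 2)) := by ring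
      _ ≤ 2 ^ n * (1 - (2 * c ^ 2 - 1) ^ 2) := by gcongr

namespace Quaternion

theorem mul_eq_neg_mul_of_re_eq_zero {z v : ℍ[ℝ]} (hz : z.re = 0) (hv : v.re = 0)
    (h : z.imI * v.imI + z.imJ * v.imJ + z.imK * v.imK = 0) : z * v = -(v * z) := by
  ext <;>
    simp only [re_mul, imI_mul, imJ_mul, imK_mul, re_neg, imI_neg, imJ_neg, imK_neg, hz, hv] <;>
    linarith

theorem exists_ne_zero_mul_eq_neg_mul {v : ℍ[ℝ]} (hv : v.re = 0) :
    ∃ z ≠ 0, z * v = -(v * z) := by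
  by_cases h : v.imJ = 0 ∧ v.imK = 0
  · refine ⟨⟨0, 0, 1, 0⟩, fun h0 => one_ne_zero (congrArg QuaternionAlgebra.imJ h0),
      mul_eq_neg_mul_of_re_eq_zero rfl hv ?_⟩
    simp [h.1, h.2]
  -- the cross product `i × v`, which vanishes only on `ℝ i`
  · refine ⟨⟨0, 0, -v.imK, v.imJ⟩, fun h0 => h ⟨?_, ?_⟩,
      mul_eq_neg_mul_of_re_eq_zero rfl hv ?_⟩
    · exact congrArg QuaternionAlgebra.imK h0
    · simpa using congrArg QuaternionAlgebra.imJ h0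
    · ring

theorem exists_ne_zero_mul_eq_mul_of_re_eq_zero {v w : ℍ[ℝ]} (hv : v.re = 0) (hw : w.re = 0)
    (h : normSq v = normSq w) : ∃ u ≠ 0, u * v = w * u := by
  by_cases hvw : v + w = 0
  · obtain ⟨z, hz, hzv⟩ := exists_ne_zero_mul_eq_neg_mul hv
    exact ⟨z, hz, by rw [hzv, eq_neg_of_add_eq_zero_right hvw, neg_mul]⟩
  · refine ⟨v + w, hvw, ?_⟩
    have hsq : v * v = w * w := by
      rw [← sq, ← sq, sq_eq_neg_normSq.mpr hv, sq_eq_neg_normSq.mpr hw, h]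
    rw [add_mul, mul_add, hsq, add_comm]

theorem normSq_eq_re_sq_add_normSq_im (a : ℍ[ℝ]) : normSq a = a.re ^ 2 + normSq a.im := by
  simp only [normSq_def', re_im, imI_im, imJ_im, imK_im]
  ring

theorem exists_ne_zero_mul_eq_mul {p q : ℍ[ℝ]} (hre : p.re = q.re) (hn : normSq p = normSq q) :
    ∃ u ≠ 0, u * p = q * u := by
  have him : normSq p.im = normSq q.im := by
    rw [normSq_eq_re_sq_add_normSq_im p, normSq_eq_re_sq_add_normSq_im q, hre] at hn
    linarith
  obtain ⟨u, hu, huv⟩ := exists_ne_zero_mul_eq_mul_of_re_eq_zero p.re_im q.re_im him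
  refine ⟨u, hu, ?_⟩
  rw [← p.re_add_im, ← q.re_add_im, mul_add, add_mul, huv, hre, (coe_commute q.re u).eq]

theorem mem_sphere_iff_normSq {q : ℍ[ℝ]} : q ∈ sphere (0 : ℍ[ℝ]) 1 ↔ normSq q = 1 := by
  rw [mem_sphere_zero_iff_norm, normSq_eq_norm_mul_self, ← sq,
    pow_eq_one_iff_of_nonneg (norm_nonneg q) two_ne_zero]

-- `a + b j ↦ !![a, -b; conj b, conj a]`, where `a = re + imI i` and `b = imJ + imK i`
def toComplexMatrix (q : ℍ[ℝ]) : Matrix (Fin 2) (Fin 2) ℂ :=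
  !![⟨q.re, q.imI⟩, ⟨-q.imJ, -q.imK⟩; ⟨q.imJ, -q.imK⟩, ⟨q.re, -q.imI⟩]

theorem toComplexMatrix_one : toComplexMatrix 1 = 1 := by
  ext i j
  fin_cases i <;> fin_cases j <;> simp [toComplexMatrix, Complex.ext_iff]

theorem toComplexMatrix_neg (q : ℍ[ℝ]) : toComplexMatrix (-q) = -toComplexMatrix q := by
  ext i j
  fin_cases i <;> fin_cases j <;> simp [toComplexMatrix, Complex.ext_iff]

theorem toComplexMatrix_mul (p q : ℍ[ℝ]) :
    toComplexMatrix (p * q) = toComplexMatrix p * toComplexMatrix q := by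
  ext i j
  fin_cases i <;> fin_cases j <;>
    simp only [toComplexMatrix, Matrix.of_apply, Matrix.cons_val', Matrix.cons_val_zero,
      Matrix.cons_val_one, Matrix.cons_val_fin_one, Matrix.mul_apply, Fin.sum_univ_two,
      Fin.isValue, Fin.zero_eta, Fin.mk_one, Complex.ext_iff, Complex.add_re, Complex.mul_re,
      Complex.add_im, Complex.mul_im, re_mul, imI_mul, imJ_mul, imK_mul] <;>
    constructor <;> ring

theorem toComplexMatrix_star (q : ℍ[ℝ]) :
    toComplexMatrix (star q) = star (toComplexMatrix q) := by
  ext i j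
  fin_cases i <;> fin_cases j <;> simp [toComplexMatrix, Complex.ext_iff]

theorem det_toComplexMatrix (q : ℍ[ℝ]) : (toComplexMatrix q).det = normSq q := by
  simp only [toComplexMatrix, Matrix.det_fin_two_of, normSq_def', Complex.ext_iff,
    Complex.sub_re, Complex.mul_re, Complex.sub_im, Complex.mul_im, Complex.ofReal_re,
    Complex.ofReal_im]
  constructor <;> ring

end Quaternion

local notation "S³" => sphere (0 : ℍ[ℝ]) 1

namespace Quaternion.UnitSphere

theorem normSq_eq_one (q : S³) : normSq (q : ℍ[ℝ]) = 1 := mem_sphere_iff_normSq.mp q.2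

theorem coe_inv_eq_star (q : S³) : ((q⁻¹ : S³) : ℍ[ℝ]) = star (q : ℍ[ℝ]) := by
  rw [Metric.unitSphere.coe_inv]
  exact inv_eq_of_mul_eq_one_left (by rw [star_mul_self, normSq_eq_one, coe_one])

theorem re_mul_self (q : S³) : ((q : ℍ[ℝ]) * q).re = 2 * (q : ℍ[ℝ]).re ^ 2 - 1 := by
  have := normSq_eq_one q
  rw [normSq_def'] at this
  rw [re_mul]
  linear_combination -this

theorem sq_re_le_one (q : S³) : (q : ℍ[ℝ]).re ^ 2 ≤ 1 := by
  have h := normSq_eq_one q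
  rw [normSq_eq_re_sq_add_normSq_im] at h
  linarith [normSq_nonneg (a := (q : ℍ[ℝ]).im)]

theorem sq_re_lt_one {q : S³} (h1 : (q : ℍ[ℝ]) ≠ 1) (h2 : (q : ℍ[ℝ]) ≠ -1) :
    (q : ℍ[ℝ]).re ^ 2 < 1 := by
  refine (sq_re_le_one q).lt_of_ne fun hre => ?_
  have him : (q : ℍ[ℝ]).im = 0 := by
    have h := normSq_eq_one q
    rw [normSq_eq_re_sq_add_normSq_im, hre, add_eq_left, normSq_eq_zero] at h
    exact h
  rcases sq_eq_one_iff.1 hre with h | h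
  · exact h1 (by rw [← re_add_im (q : ℍ[ℝ]), him, h, add_zero, coe_one])
  · exact h2 (by rw [← re_add_im (q : ℍ[ℝ]), him, h, add_zero, coe_neg, coe_one])

theorem exists_conj_eq {p q : S³} (h : (p : ℍ[ℝ]).re = (q : ℍ[ℝ]).re) :
    ∃ u : S³, u * p * u⁻¹ = q := by
  obtain ⟨u, hu, hup⟩ := exists_ne_zero_mul_eq_mul h (by rw [normSq_eq_one, normSq_eq_one])
  refine ⟨⟨(‖u‖⁻¹ : ℝ) • u, mem_sphere_zero_iff_norm.2 (norm_smul_inv_norm hu)⟩, ?_⟩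
  rw [mul_inv_eq_iff_eq_mul]
  ext1
  simp only [Metric.unitSphere.coe_mul, smul_mul_assoc, mul_smul_comm, hup]

instance : ConnectedSpace S³ :=
  isConnected_iff_connectedSpace.mp
    (isConnected_sphere (by rw [rank_eq_four]; norm_num) 0 zero_le_one)

theorem Icc_subset_re_image {N : Subgroup S³} [hN : N.Normal] {q : S³} (hq : q ∈ N) :
    Icc (2 * (q : ℍ[ℝ]).re ^ 2 - 1) 1 ⊆ (fun x : S³ => (x : ℍ[ℝ]).re) '' N := by
  obtain ⟨u, hu⟩ := exists_conj_eq (p := q⁻¹) (q := q) (by rw [coe_inv_eq_star, re_star])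
  let f : S³ → ℝ := fun x => ((q * (x * q⁻¹ * x⁻¹) : S³) : ℍ[ℝ]).re
  have hf : Continuous f := continuous_re.comp (continuous_subtype_val.comp (by fun_prop))
  have hfN : range f ⊆ (fun x : S³ => (x : ℍ[ℝ]).re) '' N := by
    rintro _ ⟨x, rfl⟩
    exact ⟨_, mul_mem hq (hN.conj_mem _ (inv_mem hq) x), rfl⟩
  have hfu : f u = 2 * (q : ℍ[ℝ]).re ^ 2 - 1 := by
    simp only [f, hu]
    exact re_mul_self q
  have hf1 : f 1 = 1 := by
    simp only [f, one_mul, inv_one, mul_one, mul_inv_cancel, Metric.unitSphere.coe_one, re_one]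
  have := (intermediate_value_univ u 1 hf).trans hfN
  rwa [hfu, hf1] at this

theorem eq_top_of_mem_of_sq_re_lt_one {N : Subgroup S³} [hN : N.Normal] {q : S³} (hq : q ∈ N)
    (hq1 : (q : ℍ[ℝ]).re ^ 2 < 1) : N = ⊤ := by
  set R := (fun x : S³ => (x : ℍ[ℝ]).re) '' N
  have hR : ∀ c ∈ R, Icc (2 * c ^ 2 - 1) 1 ⊆ R := by
    rintro _ ⟨x, hx, rfl⟩
    exact Icc_subset_re_image hx
  obtain ⟨z, hz, hz0⟩ := zero_mem_of_forall_Icc_subset hR ⟨q, hq, rfl⟩ hq1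
  refine eq_top_iff.2 fun p _ => ?_
  have hp : (p : ℍ[ℝ]).re ∈ Icc (2 * (z : ℍ[ℝ]).re ^ 2 - 1) 1 := by
    have := sq_re_le_one p
    simp only [hz0, mem_Icc]
    constructor <;> nlinarith
  obtain ⟨x, hx, hxp⟩ := Icc_subset_re_image hz hp
  obtain ⟨u, rfl⟩ := exists_conj_eq hxp
  exact hN.conj_mem x hx u

def toSU2 : S³ →* SU2 where
  toFun q := ⟨⟨toComplexMatrix q, by
      rw [Matrix.mem_unitaryGroup_iff', ← toComplexMatrix_star, ← toComplexMatrix_mul,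
        star_mul_self, normSq_eq_one, coe_one, toComplexMatrix_one]⟩, by
    show (toComplexMatrix q).det = 1
    rw [det_toComplexMatrix, normSq_eq_one, Complex.ofReal_one]⟩
  map_one' := Subtype.ext (Subtype.ext toComplexMatrix_one)
  map_mul' p q := Subtype.ext (Subtype.ext (toComplexMatrix_mul p q))

theorem coe_toSU2 (q : S³) :
    ((toSU2 q : Matrix.unitaryGroup (Fin 2) ℂ) : Matrix (Fin 2) (Fin 2) ℂ) =
      toComplexMatrix q :=
  rfl

theorem toSU2_surjective : Function.Surjective toSU2 := by
  rintro ⟨⟨A, hA⟩, hdet⟩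
  replace hdet : A.det = 1 := hdet
  have hadj : star A = !![A 1 1, -A 0 1; -A 1 0, A 0 0] := by
    rw [← Matrix.adjugate_fin_two, ← Matrix.inv_eq_left_inv (Matrix.mem_unitaryGroup_iff'.1 hA),
      Matrix.inv_def, hdet, Ring.inverse_one, one_smul]
  have h11 : A 1 1 = conj (A 0 0) := by simpa using (congrFun₂ hadj 0 0).symm
  have h01 : A 0 1 = -conj (A 1 0) := by simpa using (congrArg Neg.neg (congrFun₂ hadj 0 1)).symm
  let q : ℍ[ℝ] := ⟨(A 0 0).re, (A 0 0).im, (A 1 0).re, -(A 1 0).im⟩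
  have hqA : toComplexMatrix q = A := by
    ext i j
    fin_cases i <;> fin_cases j <;> simp [q, toComplexMatrix, Complex.ext_iff, h11, h01]
  have hq : q ∈ S³ := by
    rw [mem_sphere_iff_normSq]
    exact_mod_cast (det_toComplexMatrix q).symm.trans (hqA ▸ hdet)
  exact ⟨⟨q, hq⟩, Subtype.ext (Subtype.ext hqA)⟩

end Quaternion.UnitSphere

open Quaternion.UnitSphere in
/-- Every non-central element of `SU(2)` normally generates `SU(2)`. -/
theorem stmt_10 (g : ↥SU2)
    (h1 : ((g : Matrix.unitaryGroup (Fin 2) ℂ) : Matrix (Fin 2) (Fin 2) ℂ) ≠ 1)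
    (h2 : ((g : Matrix.unitaryGroup (Fin 2) ℂ) : Matrix (Fin 2) (Fin 2) ℂ) ≠ -1) :
    Subgroup.normalClosure ({g} : Set ↥SU2) = ⊤ := by
  obtain ⟨q, rfl⟩ := toSU2_surjective g
  have hq : (q : ℍ[ℝ]).re ^ 2 < 1 := by
    refine sq_re_lt_one (fun h => h1 ?_) (fun h => h2 ?_)
    · rw [coe_toSU2, h, toComplexMatrix_one]
    · rw [coe_toSU2, h, toComplexMatrix_neg, toComplexMatrix_one]
  have hN : (Subgroup.normalClosure {toSU2 q}).comap toSU2 = ⊤ :=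
    haveI := Subgroup.normalClosure_normal (s := {toSU2 q}).comap toSU2
    eq_top_of_mem_of_sq_re_lt_one (Subgroup.subset_normalClosure rfl) hq
  rw [← Subgroup.map_comap_eq_self_of_surjective toSU2_surjective (Subgroup.normalClosure _), hN,
    Subgroup.map_top_of_surjective _ toSU2_surjective]
end

section
/- Let F₁, ..., F_n be lifts of orientation-preserving circle homeomorphisms and suppose each F_i is within ε (in sup norm) of a lift R_i of a rigid rotation, i.e. sup_x |F_i(x) - R_i(x)| ≤ ε. Then the translation number of the composition F₁∘⋯∘F_n differs from the translation number of R₁∘⋯∘R_n by at most nε. -/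
/-!
If `|f x - (x + a)| ≤ δ` for all `x`, then `τ f` lies within `δ` of `a`, since `τ` is monotone and
`τ (x ↦ x + a) = a`. Composing lifts adds the displacements, so `F₁ ∘ ⋯ ∘ Fₙ` stays within `n ε`
of the translation by `∑ cᵢ`, and the composition of the rotations is exactly that translation.
-/

namespace CircleDeg1Lift

theorem abs_translationNumber_sub_le {f : CircleDeg1Lift} {a δ : ℝ}
    (hf : ∀ x, |f x - (x + a)| ≤ δ) : |f.translationNumber - a| ≤ δ := by
  have hle : f.translationNumber ≤ a + δ :=
    translationNumber_le_of_le_add f fun x => by linarith [(abs_le.1 (hf x)).2]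
  have hge : a - δ ≤ f.translationNumber :=
    le_translationNumber_of_add_le f fun x => by linarith [(abs_le.1 (hf x)).1]
  exact abs_le.2 ⟨by linarith, by linarith⟩

theorem abs_prod_ofFn_apply_sub_le {n : ℕ} (F : Fin n → CircleDeg1Lift) (c : Fin n → ℝ) {ε : ℝ}
    (h : ∀ i x, |F i x - (x + c i)| ≤ ε) (x : ℝ) :
    |(List.ofFn F).prod x - (x + ∑ i, c i)| ≤ n * ε := by
  induction n generalizing x with
  | zero => simp
  | succ n ih =>
    set y := (List.ofFn fun i => F i.succ).prod x
    have hy : |y - (x + ∑ i : Fin n, c i.succ)| ≤ n * ε := ih _ _ (fun i => h i.succ) x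
    rw [List.ofFn_succ, List.prod_cons, mul_apply, Fin.sum_univ_succ]
    calc |F 0 y - (x + (c 0 + ∑ i : Fin n, c i.succ))|
        = |(F 0 y - (y + c 0)) + (y - (x + ∑ i : Fin n, c i.succ))| := by ring_nf
      _ ≤ |F 0 y - (y + c 0)| + |y - (x + ∑ i : Fin n, c i.succ)| := abs_add_le _ _
      _ ≤ ε + n * ε := add_le_add (h 0 y) hy
      _ = (n + 1 : ℕ) * ε := by push_cast; ring

end CircleDeg1Lift

open CircleDeg1Lift in
theorem stmt_13_general (n : ℕ) (F : Fin n → CircleDeg1Lift)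
    (c : Fin n → ℝ) (ε : ℝ)
    (h : ∀ i, ∀ x : ℝ, |F i x - (x + c i)| ≤ ε) :
    |((List.ofFn F).prod).translationNumber -
        ((List.ofFn fun i => ((CircleDeg1Lift.translate
          (Multiplicative.ofAdd (c i)) : CircleDeg1Liftˣ) : CircleDeg1Lift)).prod).translationNumber| ≤ n * ε := by
  set R := fun i => ((translate (Multiplicative.ofAdd (c i)) : CircleDeg1Liftˣ) : CircleDeg1Lift)
  have hF : |(List.ofFn F).prod.translationNumber - ∑ i, c i| ≤ n * ε :=
    abs_translationNumber_sub_le (abs_prod_ofFn_apply_sub_le F c h)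
  have hR : |(List.ofFn R).prod.translationNumber - ∑ i, c i| ≤ n * 0 :=
    abs_translationNumber_sub_le <| abs_prod_ofFn_apply_sub_le R c fun i x => by
      simp [R, translate_apply, add_comm]
  calc _ ≤ |(List.ofFn F).prod.translationNumber - ∑ i, c i|
        + |∑ i, c i - (List.ofFn R).prod.translationNumber| := abs_sub_le _ _ _
    _ ≤ n * ε + n * 0 := by rw [abs_sub_comm (∑ i, c i)]; exact add_le_add hF hR
    _ = n * ε := by ring

/-- If each lift `Fᵢ` is within `ε` (sup norm) of a lift of a rigid rotation (a translation
`x ↦ x + cᵢ`), then the translation number of the composition `F₁ ∘ ⋯ ∘ Fₙ` differs from that of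
the composition of the translations by at most `n ε`. -/
theorem stmt_13 (n : ℕ) (F : Fin n → CircleDeg1Lift)
    (hbij : ∀ i, Function.Bijective (F i)) (c : Fin n → ℝ) (ε : ℝ)
    (h : ∀ i, ∀ x : ℝ, |F i x - (x + c i)| ≤ ε) :
    |((List.ofFn F).prod).translationNumber -
        ((List.ofFn fun i => ((CircleDeg1Lift.translate
          (Multiplicative.ofAdd (c i)) : CircleDeg1Liftˣ) : CircleDeg1Lift)).prod).translationNumber| ≤ n * ε :=
  stmt_13_general n F c ε h
end

section
/- Every element of PSL(2,ℝ) is a commutator: for each g ∈ PSL(2,ℝ) there exist a, b ∈ PSL(2,ℝ) with g = a b a⁻¹ b⁻¹. -/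
/-!
If `M ∈ SL(2,ℝ)` has diagonal entries `a < 1 < d` and trace `a + d ≠ 2`, then `M = ⁅A, B⁆` with
`A = diag(t, t⁻¹)`, `t² = (1 - a)/(d - 1)`, and `B = !![p, 1; r, s]`: the condition `A B = M B A`
is linear in `p, r, s` and has a solution of determinant one. Every non-central `M` with trace
`≠ 2` is conjugate to such a matrix: an upper unipotent conjugation makes the entry `M₀₁`
nonzero, and a lower unipotent conjugation then moves the diagonal entries apart. In `PSL(2,ℝ)`
an element is represented by both `M` and `-M`, whose traces are opposite, so one of them has
trace `≠ 2`.
-/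

open Matrix Subgroup
open scoped MatrixGroups commutatorElement

section Commutators

variable {G H : Type*} [Group G] [Group H]

theorem conj_mem_commutatorSet_iff (x g : G) :
    x * g * x⁻¹ ∈ commutatorSet G ↔ g ∈ commutatorSet G := by
  constructor
  · rintro ⟨a, b, h⟩
    refine ⟨x⁻¹ * a * x⁻¹⁻¹, x⁻¹ * b * x⁻¹⁻¹, ?_⟩
    rw [← conjugate_commutatorElement, h]
    group
  · rintro ⟨a, b, rfl⟩
    exact ⟨_, _, (conjugate_commutatorElement a b x).symm⟩

theorem map_mem_commutatorSet (f : G →* H) {g : G} (hg : g ∈ commutatorSet G) :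
    f g ∈ commutatorSet H := by
  obtain ⟨a, b, rfl⟩ := hg
  exact ⟨f a, f b, (map_commutatorElement f a b).symm⟩

end Commutators

namespace Matrix.SpecialLinearGroup

section General

variable {n R : Type*} [Fintype n] [DecidableEq n] [CommRing R]

theorem neg_one_mem_center [Fact (Even (Fintype.card n))] :
    (-1 : SpecialLinearGroup n R) ∈ center (SpecialLinearGroup n R) :=
  Subgroup.mem_center_iff.mpr fun _ => by rw [neg_one_mul, mul_neg_one]

theorem trace_conj (x M : SpecialLinearGroup n R) :
    trace ((x * M * x⁻¹ : SpecialLinearGroup n R) : Matrix n n R) = trace (M : Matrix n n R) := by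
  rw [coe_mul, coe_mul, trace_mul_cycle, ← coe_mul, inv_mul_cancel, coe_one, one_mul]

end General

section Unipotent

variable {R : Type*} [CommRing R]

def lowerUnipotent (t : R) : SL(2, R) := ⟨!![1, 0; t, 1], by simp⟩

def upperUnipotent (t : R) : SL(2, R) := ⟨!![1, t; 0, 1], by simp⟩

theorem coe_lowerUnipotent (t : R) :
    (lowerUnipotent t : Matrix (Fin 2) (Fin 2) R) = !![1, 0; t, 1] := rfl

theorem coe_upperUnipotent (t : R) :
    (upperUnipotent t : Matrix (Fin 2) (Fin 2) R) = !![1, t; 0, 1] := rfl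

theorem conj_lowerUnipotent_apply (t : R) (M : SL(2, R)) :
    (lowerUnipotent t * M * (lowerUnipotent t)⁻¹) 0 0 = M 0 0 - M 0 1 * t ∧
    (lowerUnipotent t * M * (lowerUnipotent t)⁻¹) 1 1 = M 1 1 + M 0 1 * t := by
  simp [coe_lowerUnipotent, coe_mul, coe_inv, adjugate_fin_two, mul_apply, vecMul, dotProduct,
    Fin.sum_univ_two]
  constructor <;> ring

theorem conj_upperUnipotent_apply_zero_one (t : R) (M : SL(2, R)) :
    (upperUnipotent t * M * (upperUnipotent t)⁻¹) 0 1 =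
      M 0 1 + t * (M 1 1 - M 0 0) - M 1 0 * t ^ 2 := by
  simp [coe_upperUnipotent, coe_mul, coe_inv, adjugate_fin_two, mul_apply, vecMul, dotProduct,
    Fin.sum_univ_two]
  ring

end Unipotent

theorem mem_commutatorSet_of_lt_one_lt (M : SL(2, ℝ)) (ha : M 0 0 < 1) (hd : 1 < M 1 1)
    (htr : trace (M : Matrix (Fin 2) (Fin 2) ℝ) ≠ 2) : M ∈ commutatorSet SL(2, ℝ) := by
  obtain ⟨a, b, c, d, hM⟩ : ∃ a b c d : ℝ, (M : Matrix (Fin 2) (Fin 2) ℝ) = !![a, b; c, d] :=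
    ⟨_, _, _, _, eta_fin_two _⟩
  have hdet : a * d - b * c = 1 := by rw [← det_fin_two_of, ← hM]; exact M.2
  simp only [hM, of_apply, cons_val', cons_val_zero, cons_val_one, empty_val', cons_val_fin_one,
    trace_fin_two_of] at ha hd htr
  have hd1 : d - 1 ≠ 0 := by linarith
  have hw : 2 - a - d ≠ 0 := fun h => htr (by linarith)
  obtain ⟨t, ht, ht2⟩ : ∃ t : ℝ, t ≠ 0 ∧ t ^ 2 = (1 - a) / (d - 1) := by
    have hu : 0 < (1 - a) / (d - 1) := div_pos (by linarith) (by linarith)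
    exact ⟨√_, (Real.sqrt_pos.mpr hu).ne', Real.sq_sqrt hu.le⟩
  obtain ⟨A, hA⟩ : ∃ A : SL(2, ℝ), (A : Matrix (Fin 2) (Fin 2) ℝ) = !![t, 0; 0, t⁻¹] :=
    ⟨⟨_, by simp [ht]⟩, rfl⟩
  obtain ⟨B, hB⟩ : ∃ B : SL(2, ℝ), (B : Matrix (Fin 2) (Fin 2) ℝ) =
      !![b * (d - 1) / (2 - a - d), 1; (1 - a) * (d - 1) / (2 - a - d), -c / (d - 1)] :=
    ⟨⟨_, by rw [det_fin_two_of]; field_simp; linear_combination hdet⟩, rfl⟩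
  refine ⟨A, B, ?_⟩
  rw [commutatorElement_def, mul_inv_eq_iff_eq_mul, mul_inv_eq_iff_eq_mul]
  ext i j
  fin_cases i <;> fin_cases j <;> simp [coe_mul, hA, hB, hM, mul_apply, Fin.sum_univ_two] <;>
    field_simp
  · ring
  · rw [ht2]; field_simp; linear_combination -hdet
  · rw [ht2]; field_simp; linear_combination (1 - a) * hdet
  · ring

theorem mem_commutatorSet_of_apply_zero_one_ne_zero (M : SL(2, ℝ)) (hb : M 0 1 ≠ 0)
    (htr : trace (M : Matrix (Fin 2) (Fin 2) ℝ) ≠ 2) : M ∈ commutatorSet SL(2, ℝ) := by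
  set τ := trace (M : Matrix (Fin 2) (Fin 2) ℝ)
  have hτ : τ = M 0 0 + M 1 1 := trace_fin_two _
  have hx : M 0 1 * ((|τ| + 2 - M 1 1) / M 0 1) = |τ| + 2 - M 1 1 := mul_div_cancel₀ _ hb
  rw [← conj_mem_commutatorSet_iff (lowerUnipotent ((|τ| + 2 - M 1 1) / M 0 1))]
  obtain ⟨h00, h11⟩ := conj_lowerUnipotent_apply ((|τ| + 2 - M 1 1) / M 0 1) M
  apply mem_commutatorSet_of_lt_one_lt
  · rw [h00, hx]; linarith [le_abs_self τ]
  · rw [h11, hx]; linarith [abs_nonneg τ]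
  · rwa [trace_conj]

theorem exists_conj_apply_zero_one_ne_zero {M : SL(2, ℝ)} (hM : M ∉ center SL(2, ℝ)) :
    ∃ x : SL(2, ℝ), (x * M * x⁻¹) 0 1 ≠ 0 := by
  by_contra! h
  have hb : M 0 1 = 0 := by simpa using h 1
  have hpos := h (upperUnipotent 1)
  have hneg := h (upperUnipotent (-1))
  rw [conj_upperUnipotent_apply_zero_one] at hpos hneg
  have hc : M 1 0 = 0 := by linarith
  have had : M 0 0 = M 1 1 := by linarith
  apply hM
  refine mem_center_iff.mpr ⟨M 0 0, ?_, ?_⟩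
  · have hdet : M 0 0 * M 1 1 - M 0 1 * M 1 0 = 1 := by rw [← det_fin_two]; exact M.2
    rw [hb, had] at hdet
    rw [Fintype.card_fin, had]
    linear_combination hdet
  · ext i j
    fin_cases i <;> fin_cases j <;> simp [hb, hc, had]

theorem mem_commutatorSet_of_notMem_center {M : SL(2, ℝ)} (hM : M ∉ center SL(2, ℝ))
    (htr : trace (M : Matrix (Fin 2) (Fin 2) ℝ) ≠ 2) : M ∈ commutatorSet SL(2, ℝ) := by
  obtain ⟨x, hx⟩ := exists_conj_apply_zero_one_ne_zero hM
  rw [← conj_mem_commutatorSet_iff x]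
  exact mem_commutatorSet_of_apply_zero_one_ne_zero _ hx (by rwa [trace_conj])

end Matrix.SpecialLinearGroup

open Matrix.SpecialLinearGroup

/-- Every element of `PSL(2,ℝ) = SL(2,ℝ)/center` is a commutator. -/
theorem stmt_16
    (g : Matrix.SpecialLinearGroup (Fin 2) ℝ ⧸
      Subgroup.center (Matrix.SpecialLinearGroup (Fin 2) ℝ)) :
    ∃ a b : Matrix.SpecialLinearGroup (Fin 2) ℝ ⧸
      Subgroup.center (Matrix.SpecialLinearGroup (Fin 2) ℝ),
      g = a * b * a⁻¹ * b⁻¹ := by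
  suffices g ∈ commutatorSet _ by
    obtain ⟨a, b, h⟩ := this
    exact ⟨a, b, h.symm⟩
  induction g using QuotientGroup.induction_on with | H M => ?_
  by_cases hM : M ∈ center SL(2, ℝ)
  · rw [(QuotientGroup.eq_one_iff M).mpr hM]
    exact one_mem_commutatorSet _
  obtain ⟨N, hN, hNM, hNtr⟩ : ∃ N : SL(2, ℝ), (N : SL(2, ℝ) ⧸ center SL(2, ℝ)) = M ∧
      N ∉ center SL(2, ℝ) ∧ trace (N : Matrix (Fin 2) (Fin 2) ℝ) ≠ 2 := by
    by_cases htr : trace (M : Matrix (Fin 2) (Fin 2) ℝ) = 2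
    · refine ⟨-M, ?_, ?_, ?_⟩
      · rw [← neg_one_mul, QuotientGroup.mk_mul,
          (QuotientGroup.eq_one_iff _).mpr neg_one_mem_center, one_mul]
      · rwa [← neg_one_mul, Subgroup.mul_mem_cancel_left _ neg_one_mem_center]
      · rw [coe_neg, trace_neg, htr]; norm_num
    · exact ⟨M, rfl, hM, htr⟩
  rw [← hN]
  exact map_mem_commutatorSet (QuotientGroup.mk' _) (mem_commutatorSet_of_notMem_center hNM hNtr)
end
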